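/- arXiv:2601.05698 — 3 statements merged into one kernel-verified Lean document; each statement's English description precedes it below -/
import Mathlib

section
/- Let c1, c2 ∈ (0,1) with c1 < c2, and for s ∈ ℝ define P_ℕ(s) = log 2 + (s/2)·log(c1·c2) if s ≥ 0 and P_ℕ(s) = log(c1^s + c2^s) if s < 0. Then P_ℕ is continuous and differentiable at s = 0, but the second derivative does not exist at s = 0 (the left second derivative differs from the right second derivative). -/
/-- The pressure function of the reflective simple random walk: affine for `s ≥ 0` and
`log (c1^s + c2^s)` for `s < 0`. -/
noncomputable def pressureN (c1 c2 : ℝ) : ℝ → ℝ := fun s =>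
  if 0 ≤ s then Real.log 2 + s / 2 * Real.log (c1 * c2) else Real.log (c1 ^ s + c2 ^ s)

/-- For `c1 < c2` in `(0,1)`, the pressure `P_ℕ` is continuous and differentiable at `0`,
but the second derivative does not exist at `0`: the left second derivative differs from
the right second derivative. -/
theorem stmt2 (c1 c2 : ℝ) (h1 : c1 ∈ Set.Ioo (0:ℝ) 1) (h2 : c2 ∈ Set.Ioo (0:ℝ) 1)
    (hlt : c1 < c2) :
    ContinuousAt (pressureN c1 c2) 0 ∧
    DifferentiableAt ℝ (pressureN c1 c2) 0 ∧
    derivWithin (derivWithin (pressureN c1 c2) (Set.Iic 0)) (Set.Iic 0) 0 ≠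
      derivWithin (derivWithin (pressureN c1 c2) (Set.Ici 0)) (Set.Ici 0) 0 := by
  obtain ⟨hc1, _⟩ := h1
  obtain ⟨hc2, _⟩ := h2
  set a := Real.log c1 with ha
  set b := Real.log c2 with hb
  set g : ℝ → ℝ := fun s => Real.log (c1 ^ s + c2 ^ s) with hgdef
  set g1 : ℝ → ℝ := fun s => (c1 ^ s * a + c2 ^ s * b) / (c1 ^ s + c2 ^ s) with hg1def
  have hpos : ∀ s : ℝ, 0 < c1 ^ s + c2 ^ s := fun s =>
    add_pos (Real.rpow_pos_of_pos hc1 s) (Real.rpow_pos_of_pos hc2 s)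
  have hu : ∀ s : ℝ, HasDerivAt (fun s => c1 ^ s + c2 ^ s)
      (c1 ^ s * a + c2 ^ s * b) s := fun s =>
    ((Real.hasStrictDerivAt_const_rpow hc1 s).hasDerivAt).add
      ((Real.hasStrictDerivAt_const_rpow hc2 s).hasDerivAt)
  have hg : ∀ s : ℝ, HasDerivAt g (g1 s) s := fun s =>
    (hu s).log (ne_of_gt (hpos s))
  -- derivative of g1 at 0
  have hnum : HasDerivAt (fun s : ℝ => c1 ^ s * a + c2 ^ s * b)
      (c1 ^ (0:ℝ) * a * a + c2 ^ (0:ℝ) * b * b) 0 :=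
    (((Real.hasStrictDerivAt_const_rpow hc1 0).hasDerivAt).mul_const a).add
      (((Real.hasStrictDerivAt_const_rpow hc2 0).hasDerivAt).mul_const b)
  have hg1 : HasDerivAt g1 ((a - b) ^ 2 / 4) 0 := by
    have := hnum.div (hu 0) (ne_of_gt (hpos 0))
    exact this.congr_deriv (by simp only [Real.rpow_zero]; ring)
  set m : ℝ := Real.log (c1 * c2) / 2 with hm
  have hg10 : g1 0 = m := by
    rw [hm, Real.log_mul (ne_of_gt hc1) (ne_of_gt hc2)]
    simp [hg1def, Real.rpow_zero]
    ring
  set f : ℝ → ℝ := fun s => Real.log 2 + s / 2 * Real.log (c1 * c2) with hfdef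
  have hf : ∀ s : ℝ, HasDerivAt f m s := by
    intro s
    have : HasDerivAt (fun s : ℝ => s / 2 * Real.log (c1 * c2))
        ((1 / 2) * Real.log (c1 * c2)) s :=
      ((hasDerivAt_id s).div_const 2).mul_const _
    have h2 := this.const_add (Real.log 2)
    exact h2.congr_deriv (by rw [hm]; ring)
  have hEqIic : Set.EqOn (pressureN c1 c2) g (Set.Iic 0) := by
    intro x hx
    rcases lt_or_eq_of_le (Set.mem_Iic.mp hx) with h | h
    · simp [pressureN, hgdef, not_le.mpr h]
    · subst h
      simp [pressureN, hgdef, Real.rpow_zero]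
      norm_num
  have hEqIci : Set.EqOn (pressureN c1 c2) f (Set.Ici 0) := by
    intro x hx
    simp [pressureN, hfdef, Set.mem_Ici.mp hx]
  -- derivative at 0
  have hL : HasDerivWithinAt (pressureN c1 c2) m (Set.Iic 0) 0 :=
    ((hg10 ▸ (hg 0)).hasDerivWithinAt).congr hEqIic (hEqIic Set.self_mem_Iic)
  have hR : HasDerivWithinAt (pressureN c1 c2) m (Set.Ici 0) 0 :=
    ((hf 0).hasDerivWithinAt).congr hEqIci (hEqIci Set.self_mem_Ici)
  have hD : HasDerivAt (pressureN c1 c2) m 0 := by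
    have := hL.union hR
    rw [Set.Iic_union_Ici] at this
    exact hasDerivWithinAt_univ.mp this
  refine ⟨hD.continuousAt, hD.differentiableAt, ?_⟩
  -- left second derivative
  have hd1L : Set.EqOn (derivWithin (pressureN c1 c2) (Set.Iic 0)) g1 (Set.Iic 0) := by
    intro x hx
    rw [derivWithin_congr hEqIic (hEqIic hx)]
    exact ((hg x).hasDerivWithinAt).derivWithin (uniqueDiffOn_Iic 0 x hx)
  have hLval : derivWithin (derivWithin (pressureN c1 c2) (Set.Iic 0)) (Set.Iic 0) 0
      = (a - b) ^ 2 / 4 := by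
    rw [derivWithin_congr hd1L (hd1L Set.self_mem_Iic)]
    exact hg1.hasDerivWithinAt.derivWithin (uniqueDiffOn_Iic 0 0 Set.self_mem_Iic)
  have hd1R : Set.EqOn (derivWithin (pressureN c1 c2) (Set.Ici 0)) (fun _ => m)
      (Set.Ici 0) := by
    intro x hx
    rw [derivWithin_congr hEqIci (hEqIci hx)]
    exact ((hf x).hasDerivWithinAt).derivWithin (uniqueDiffOn_Ici 0 x hx)
  have hRval : derivWithin (derivWithin (pressureN c1 c2) (Set.Ici 0)) (Set.Ici 0) 0
      = 0 := by
    rw [derivWithin_congr hd1R (hd1R Set.self_mem_Ici)]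
    exact (hasDerivWithinAt_const _ _ _).derivWithin (uniqueDiffOn_Ici 0 0 Set.self_mem_Ici)
  rw [hLval, hRval]
  have hab : a - b ≠ 0 := sub_ne_zero.mpr (ne_of_lt (Real.log_lt_log hc1 hlt))
  exact div_ne_zero (pow_ne_zero 2 hab) (by norm_num)
end

section
/- The function s ↦ ζ(2s−1)/ζ(2s) is strictly decreasing on (1,∞). Consequently, since ζ(2s−1)/ζ(2s) → ∞ as s → 1⁺ and ζ(3)/ζ(4) < 2, there is a unique s₀ ∈ (1,2) with ζ(2s₀−1)/ζ(2s₀) = 2. -/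
/-- The real zeta function `Z(x) = ∑_{k ≥ 1} k^{-x}`. -/
noncomputable def realZeta (x : ℝ) : ℝ := ∑' k : ℕ, ((k : ℝ) + 1) ^ (-x)

namespace Stmt11Aux

open Real Filter Set LSeries.notation

/-- Dirichlet series of the totient function (real version). -/
noncomputable def phiSeries (x : ℝ) : ℝ :=
  ∑' n : ℕ, (Nat.totient (n + 1) : ℝ) * ((n : ℝ) + 1) ^ (-x)

lemma summable_realZeta {x : ℝ} (hx : 1 < x) :
    Summable (fun k : ℕ => ((k : ℝ) + 1) ^ (-x)) := by
  have h : Summable (fun n : ℕ => ((n : ℝ) ^ x)⁻¹) := Real.summable_nat_rpow_inv.mpr hx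
  have h2 := h.comp_injective (add_left_injective 1)
  refine h2.congr fun k => ?_
  simp only [Function.comp_apply]
  rw [Real.rpow_neg (by positivity)]
  push_cast
  ring_nf

lemma one_le_realZeta {x : ℝ} (hx : 1 < x) : 1 ≤ realZeta x := by
  have h := summable_realZeta hx
  have h0 : ((0 : ℕ) + 1 : ℝ) ^ (-x) = 1 := by norm_num
  calc (1:ℝ) = ((0 : ℕ) + 1 : ℝ) ^ (-x) := h0.symm
    _ ≤ realZeta x := Summable.le_tsum h 0 fun i _ => by positivity

lemma realZeta_pos {x : ℝ} (hx : 1 < x) : 0 < realZeta x :=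
  lt_of_lt_of_le one_pos (one_le_realZeta hx)

lemma ofReal_realZeta {x : ℝ} (hx : 1 < x) : riemannZeta (x : ℂ) = (realZeta x : ℂ) := by
  rw [zeta_eq_tsum_one_div_nat_add_one_cpow (by simpa using hx), realZeta,
    Complex.ofReal_tsum]
  refine tsum_congr fun n => ?_
  have hpos : (0:ℝ) ≤ (n : ℝ) + 1 := by positivity
  rw [Real.rpow_neg hpos, Complex.ofReal_inv, Complex.ofReal_cpow hpos]
  push_cast
  rw [one_div]

lemma summable_phi {x : ℝ} (hx : 2 < x) :
    Summable (fun n : ℕ => (Nat.totient (n + 1) : ℝ) * ((n : ℝ) + 1) ^ (-x)) := by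
  have h := summable_realZeta (x := x - 1) (by linarith)
  refine h.of_nonneg_of_le (fun n => by positivity) fun n => ?_
  have h1 : (Nat.totient (n + 1) : ℝ) ≤ (n : ℝ) + 1 := by
    exact_mod_cast Nat.cast_le.mpr (Nat.totient_le (n + 1))
  have h2 : ((n : ℝ) + 1) ^ (-(x - 1)) = ((n : ℝ) + 1) * ((n : ℝ) + 1) ^ (-x) := by
    rw [show -(x - 1) = 1 + (-x) by ring, Real.rpow_add (by positivity), Real.rpow_one]
  rw [h2]
  have h3 : (0:ℝ) ≤ ((n : ℝ) + 1) ^ (-x) := by positivity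
  exact mul_le_mul_of_nonneg_right h1 h3

/-- The totient convolved with the constant 1 gives the identity. -/
lemma totient_convolution :
    ((fun n : ℕ => (Nat.totient n : ℂ)) ⍟ (1 : ℕ → ℂ)) = fun n : ℕ => (n : ℂ) := by
  funext n
  rw [LSeries.convolution_def]
  rcases eq_or_ne n 0 with rfl | hn
  · simp
  · have := Nat.sum_divisorsAntidiagonal (fun i _ => ((Nat.totient i : ℂ))) (n := n)
    simp only [Pi.one_apply, mul_one]
    rw [this, ← Nat.cast_sum, Nat.sum_totient]

lemma term_id_eq (x : ℂ) (n : ℕ) :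
    LSeries.term (fun n : ℕ => (n : ℂ)) x n = LSeries.term 1 (x - 1) n := by
  rcases eq_or_ne n 0 with rfl | hn
  · simp [LSeries.term_zero]
  · rw [LSeries.term_of_ne_zero hn, LSeries.term_of_ne_zero hn]
    have hn0 : (n : ℂ) ≠ 0 := Nat.cast_ne_zero.mpr hn
    have hpow : (n : ℂ) ^ x = (n : ℂ) ^ (x - 1) * (n : ℂ) := by
      have h := Complex.cpow_add (x := (n : ℂ)) (x - 1) 1 hn0
      rw [Complex.cpow_one, sub_add_cancel] at h
      exact h
    have hne : (n : ℂ) ^ (x - 1) ≠ 0 := by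
      intro h
      exact hn0 (Complex.cpow_eq_zero_iff _ _ |>.mp h).1
    rw [Pi.one_apply, hpow]
    field_simp

lemma LSeriesSummable_id {x : ℂ} (hx : 2 < x.re) :
    LSeriesSummable (fun n : ℕ => (n : ℂ)) x := by
  have h : LSeriesSummable 1 (x - 1) := by
    rw [LSeriesSummable_one_iff]
    simp only [Complex.sub_re, Complex.one_re]
    linarith
  exact (summable_congr fun n => term_id_eq x n).mpr h

lemma LSeriesSummable_phi {x : ℂ} (hx : 2 < x.re) :
    LSeriesSummable (fun n : ℕ => (Nat.totient n : ℂ)) x := by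
  refine Summable.of_norm_bounded (summable_norm_iff.mpr (LSeriesSummable_id hx)) fun n => ?_
  rcases eq_or_ne n 0 with rfl | hn
  · simp [LSeries.term_zero]
  · rw [LSeries.term_of_ne_zero hn, LSeries.term_of_ne_zero hn, norm_div, norm_div]
    gcongr
    simp only [Complex.norm_natCast]
    exact_mod_cast Nat.totient_le n

/-- The key complex identity: for x > 2 real, `phiSeries x * ζ(x) = ζ(x-1)`. -/
lemma key_complex {x : ℝ} (hx : 2 < x) :
    (phiSeries x : ℂ) * riemannZeta (x : ℂ) = riemannZeta ((x : ℝ) - 1 : ℝ) := by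
  have hre : 2 < (x : ℂ).re := by simpa using hx
  have h1re : 1 < (x : ℂ).re := by simpa using (by linarith : (1:ℝ) < x)
  have hφ := LSeriesSummable_phi hre
  have h1 : LSeriesSummable 1 (x : ℂ) := LSeriesSummable_one_iff.mpr h1re
  have hconv := LSeries_convolution' hφ h1
  rw [totient_convolution] at hconv
  -- LHS of hconv : L id x = L phi x * L 1 x
  have hid : LSeries (fun n : ℕ => (n : ℂ)) x = riemannZeta ((x - 1 : ℝ) : ℂ) := by
    rw [LSeries]
    rw [tsum_congr (term_id_eq (x : ℂ))]
    have : ((x : ℂ) - 1) = ((x - 1 : ℝ) : ℂ) := by push_cast; ring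
    rw [this]
    exact LSeries_one_eq_riemannZeta (by simp; linarith)
  have hphi : LSeries (fun n : ℕ => (Nat.totient n : ℂ)) x = (phiSeries x : ℂ) := by
    rw [LSeries, Summable.tsum_eq_zero_add hφ, LSeries.term_zero, zero_add, phiSeries,
      Complex.ofReal_tsum]
    refine tsum_congr fun n => ?_
    rw [LSeries.term_of_ne_zero (Nat.succ_ne_zero n)]
    have hpos : (0:ℝ) ≤ (n : ℝ) + 1 := by positivity
    rw [Complex.ofReal_mul, Real.rpow_neg hpos, Complex.ofReal_inv,
      Complex.ofReal_cpow hpos]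
    push_cast
    rw [div_eq_mul_inv]
  rw [hphi, LSeries_one_eq_riemannZeta h1re] at hconv
  rw [← hconv, hid]

lemma key_real {x : ℝ} (hx : 2 < x) :
    phiSeries x * realZeta x = realZeta (x - 1) := by
  have h := key_complex hx
  rw [ofReal_realZeta (by linarith : (1:ℝ) < x),
      ofReal_realZeta (by linarith : (1:ℝ) < x - 1)] at h
  exact_mod_cast h

lemma ratio_eq {s : ℝ} (hs : 1 < s) :
    realZeta (2 * s - 1) / realZeta (2 * s) = phiSeries (2 * s) := by
  have h2s : 2 < 2 * s := by linarith
  have h := key_real h2s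
  have hpos := realZeta_pos (by linarith : (1:ℝ) < 2 * s)
  field_simp [hpos.ne']
  linarith [h]

lemma phi_strictAnti {x y : ℝ} (hx : 2 < x) (hxy : x < y) :
    phiSeries y < phiSeries x := by
  have hsx := summable_phi hx
  have hsy := summable_phi (by linarith : 2 < y)
  refine Summable.tsum_lt_tsum (i := 1) (fun n => ?_) ?_ hsy hsx
  · have hb : (1:ℝ) ≤ (n : ℝ) + 1 := le_add_of_nonneg_left (Nat.cast_nonneg n)
    have := Real.rpow_le_rpow_of_exponent_le hb (by linarith : -y ≤ -x)
    have h0 : (0:ℝ) ≤ (Nat.totient (n + 1) : ℝ) := by positivity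
    exact mul_le_mul_of_nonneg_left this h0
  · have : ((1:ℕ) : ℝ) + 1 = 2 := by norm_num
    rw [this]
    have h2 : (2:ℝ) ^ (-y) < 2 ^ (-x) :=
      Real.rpow_lt_rpow_of_exponent_lt one_lt_two (by linarith)
    have hφ2 : (0:ℝ) < (Nat.totient 2 : ℝ) := by norm_num [Nat.totient_two]
    exact mul_lt_mul_of_pos_left h2 hφ2

lemma not_summable_phi_two :
    ¬ Summable (fun n : ℕ => (Nat.totient (n + 1) : ℝ) * ((n : ℝ) + 1) ^ (-(2:ℝ))) := by
  intro hS
  set g : ℕ → ℝ := fun n => (Nat.totient n : ℝ) * (n : ℝ) ^ (-(2:ℝ)) with hg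
  have hS' : Summable fun n : ℕ => g (n + 1) := by
    refine hS.congr fun n => ?_
    simp only [hg]
    push_cast
    ring_nf
  have hgsum : Summable g := (summable_nat_add_iff 1).mp hS'
  have hps : Summable fun p : Nat.Primes => g (p : ℕ) := hgsum.subtype _
  refine Nat.Primes.not_summable_one_div ?_
  refine Summable.of_nonneg_of_le (fun p => by positivity) (fun p => ?_) (hps.mul_left 2)
  -- 1 / p ≤ 2 * g p
  have hp2 : 2 ≤ (p : ℕ) := p.2.two_le
  have hp2R : (2:ℝ) ≤ (p : ℕ) := by exact_mod_cast hp2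
  have hppos : (0:ℝ) < (p : ℕ) := by linarith
  have hφ : (Nat.totient (p : ℕ) : ℝ) = ((p : ℕ) : ℝ) - 1 := by
    rw [Nat.totient_prime p.2, Nat.cast_sub (by linarith [hp2])]
    norm_num
  have hpow : ((p : ℕ) : ℝ) ^ (-(2:ℝ)) = (((p : ℕ) : ℝ) ^ (2:ℕ))⁻¹ := by
    rw [Real.rpow_neg hppos.le, show ((2:ℝ)) = ((2:ℕ):ℝ) by norm_num, Real.rpow_natCast]
  simp only [hg, hφ, hpow]
  calc (1:ℝ) / ((p : ℕ) : ℝ) ≤ 2 * (((p : ℕ) : ℝ) - 1) / ((p : ℕ) : ℝ) ^ (2:ℕ) := by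
        rw [div_le_div_iff₀ hppos (by positivity)]
        nlinarith
    _ = 2 * ((((p : ℕ) : ℝ) - 1) * (((p : ℕ) : ℝ) ^ (2:ℕ))⁻¹) := by ring

lemma tendsto_phi :
    Tendsto (fun s : ℝ => phiSeries (2 * s)) (nhdsWithin 1 (Ioi 1)) atTop := by
  rw [tendsto_atTop]
  intro M
  have hnn : ∀ n : ℕ, 0 ≤ (Nat.totient (n + 1) : ℝ) * ((n : ℝ) + 1) ^ (-(2:ℝ)) :=
    fun n => by positivity
  have hdiv := (not_summable_iff_tendsto_nat_atTop_of_nonneg hnn).mp not_summable_phi_two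
  obtain ⟨N, hN⟩ := (tendsto_atTop.mp hdiv (M + 1)).exists
  set F : ℝ → ℝ := fun s =>
    ∑ n ∈ Finset.range N, (Nat.totient (n + 1) : ℝ) * ((n : ℝ) + 1) ^ (-(2 * s)) with hF
  have hFcont : Continuous F := by
    refine continuous_finset_sum _ fun n _ => continuous_const.mul ?_
    have hb : ((n : ℝ) + 1) ≠ 0 := by positivity
    rw [continuous_iff_continuousAt]
    intro x
    exact (continuousAt_const_rpow hb).comp
      (by fun_prop : ContinuousAt (fun s : ℝ => -(2 * s)) x)
  have hF1 : M < F 1 := by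
    have : F 1 = ∑ n ∈ Finset.range N, (Nat.totient (n + 1) : ℝ) * ((n : ℝ) + 1) ^ (-(2:ℝ)) := by
      simp [hF]
    rw [this]
    linarith
  have hev : ∀ᶠ s in nhds (1:ℝ), M < F s :=
    hFcont.continuousAt.eventually_const_lt hF1
  have hev' : ∀ᶠ s in nhdsWithin 1 (Ioi 1), M < F s := nhdsWithin_le_nhds hev
  filter_upwards [hev', self_mem_nhdsWithin] with s hs hs1
  have hsum := summable_phi (by simp only [mem_Ioi] at hs1; linarith : 2 < 2 * s)
  calc M ≤ F s := hs.le
    _ ≤ phiSeries (2 * s) := by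
        refine Summable.sum_le_tsum _ (fun n _ => by positivity) hsum

lemma continuousAt_realZeta {x : ℝ} (hx : 1 < x) : ContinuousAt realZeta x := by
  have hzc : ContinuousAt (fun y : ℝ => (riemannZeta (y : ℂ)).re) x := by
    refine Complex.continuous_re.continuousAt.comp ?_
    refine (differentiableAt_riemannZeta ?_).continuousAt.comp
      Complex.continuous_ofReal.continuousAt
    simp only [ne_eq, Complex.ofReal_eq_one]
    linarith
  refine hzc.congr ?_
  have hmem : Ioi (1:ℝ) ∈ nhds x := isOpen_Ioi.mem_nhds hx
  filter_upwards [hmem] with y hy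
  rw [ofReal_realZeta hy, Complex.ofReal_re]

lemma continuousAt_ratio {s : ℝ} (hs : 1 < s) :
    ContinuousAt (fun s : ℝ => realZeta (2 * s - 1) / realZeta (2 * s)) s := by
  have h1 : ContinuousAt (fun s : ℝ => realZeta (2 * s - 1)) s :=
    ContinuousAt.comp (g := realZeta) (f := fun s : ℝ => 2 * s - 1) (x := s)
      (continuousAt_realZeta (by linarith : (1:ℝ) < 2 * s - 1)) (by fun_prop)
  have h2 : ContinuousAt (fun s : ℝ => realZeta (2 * s)) s :=
    ContinuousAt.comp (g := realZeta) (f := fun s : ℝ => 2 * s) (x := s)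
      (continuousAt_realZeta (by linarith : (1:ℝ) < 2 * s)) (by fun_prop)
  exact h1.div h2 (realZeta_pos (by linarith : (1:ℝ) < 2 * s)).ne'

end Stmt11Aux

open Stmt11Aux Set Filter in
/-- The function `s ↦ ζ(2s-1)/ζ(2s)` is strictly decreasing on `(1,∞)`; since it tends to
`∞` as `s → 1⁺` and `ζ(3)/ζ(4) < 2`, there is a unique `s₀ ∈ (1,2)` with
`ζ(2s₀-1)/ζ(2s₀) = 2`. -/
theorem stmt11 :
    StrictAntiOn (fun s : ℝ => realZeta (2 * s - 1) / realZeta (2 * s)) (Set.Ioi 1) ∧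
    Filter.Tendsto (fun s : ℝ => realZeta (2 * s - 1) / realZeta (2 * s))
      (nhdsWithin 1 (Set.Ioi 1)) Filter.atTop ∧
    realZeta 3 / realZeta 4 < 2 ∧
    ∃! s₀ : ℝ, s₀ ∈ Set.Ioo (1:ℝ) 2 ∧ realZeta (2 * s₀ - 1) / realZeta (2 * s₀) = 2 := by
  set G : ℝ → ℝ := fun s => realZeta (2 * s - 1) / realZeta (2 * s) with hG
  have hanti : StrictAntiOn G (Set.Ioi 1) := by
    intro t ht s hs hts
    simp only [hG, mem_Ioi] at *
    rw [ratio_eq ht, ratio_eq hs]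
    exact phi_strictAnti (by linarith) (by linarith)
  have htend : Tendsto G (nhdsWithin 1 (Set.Ioi 1)) atTop := by
    refine (tendsto_phi.congr' ?_)
    filter_upwards [self_mem_nhdsWithin] with s hs
    rw [hG]
    exact (ratio_eq hs).symm
  have hz4 : (1:ℝ) ≤ realZeta 4 := one_le_realZeta (by norm_num)
  have hz3 : realZeta 3 < 2 := by
    have hsum2 : HasSum (fun n : ℕ => (((n:ℝ) + 1) ^ 2)⁻¹) (Real.pi ^ 2 / 6) := by
      have h := (hasSum_nat_add_iff' (f := fun n : ℕ => (1:ℝ) / (n:ℝ) ^ 2) 1).mpr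
        hasSum_zeta_two
      simp only [Finset.range_one, Finset.sum_singleton, Nat.cast_zero] at h
      norm_num at h
      exact h
    have hle : realZeta 3 ≤ Real.pi ^ 2 / 6 := by
      rw [← hsum2.tsum_eq]
      refine Summable.tsum_le_tsum (fun n => ?_) (summable_realZeta (by norm_num)) hsum2.summable
      have hb : (1:ℝ) ≤ (n:ℝ) + 1 := le_add_of_nonneg_left (Nat.cast_nonneg n)
      have heq : ((n:ℝ) + 1) ^ (-(3:ℝ)) = (((n:ℝ) + 1) ^ (3:ℕ))⁻¹ := by
        rw [Real.rpow_neg (by positivity), ← Real.rpow_natCast ((n:ℝ)+1) 3]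
        norm_num
      rw [heq]
      refine inv_anti₀ (by positivity) ?_
      calc ((n:ℝ)+1) ^ 2 ≤ ((n:ℝ)+1) ^ 3 := pow_le_pow_right₀ hb (by norm_num)
        _ = ((n:ℝ)+1) ^ (3:ℕ) := by norm_num
    have hpi : Real.pi ^ 2 / 6 < 2 := by
      nlinarith [Real.pi_lt_d2, Real.pi_pos]
    linarith
  have hlt : realZeta 3 / realZeta 4 < 2 := by
    calc realZeta 3 / realZeta 4 ≤ realZeta 3 :=
          div_le_self (le_trans zero_le_one (one_le_realZeta (by norm_num))) hz4
      _ < 2 := hz3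
  refine ⟨hanti, htend, hlt, ?_⟩
  -- existence and uniqueness
  have hG2 : G 2 < 2 := by
    have : G 2 = realZeta 3 / realZeta 4 := by
      simp only [hG]; norm_num
    rw [this]; exact hlt
  obtain ⟨s₁, hs₁mem, hs₁gt⟩ :
      ∃ s₁, s₁ ∈ Set.Ioo (1:ℝ) 2 ∧ 2 < G s₁ := by
    have h1 : ∀ᶠ s in nhdsWithin (1:ℝ) (Set.Ioi 1), 2 < G s :=
      htend.eventually (eventually_gt_atTop 2)
    have h2 : ∀ᶠ s in nhdsWithin (1:ℝ) (Set.Ioi 1), s ∈ Set.Ioo (1:ℝ) 2 := by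
      have : Set.Ioo (1:ℝ) 2 ∈ nhdsWithin (1:ℝ) (Set.Ioi 1) :=
        Ioo_mem_nhdsGT_of_mem (by norm_num : (1:ℝ) ∈ Set.Ico (1:ℝ) 2)
      exact eventually_mem_set.mpr this
    obtain ⟨s₁, h₁, h₂⟩ := (h2.and h1).exists
    exact ⟨s₁, h₁, h₂⟩
  have hcont : ContinuousOn G (Set.Icc s₁ 2) := by
    intro x hx
    exact (continuousAt_ratio (lt_of_lt_of_le hs₁mem.1 hx.1)).continuousWithinAt
  have hIVT := intermediate_value_Icc' hs₁mem.2.le hcont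
  have h2mem : (2:ℝ) ∈ Set.Icc (G 2) (G s₁) := ⟨hG2.le, hs₁gt.le⟩
  obtain ⟨s₀, hs₀mem, hs₀eq⟩ := hIVT h2mem
  have hs₀lt : s₀ < 2 := by
    rcases lt_or_eq_of_le hs₀mem.2 with h | h
    · exact h
    · exfalso; rw [h] at hs₀eq; rw [hs₀eq] at hG2; exact lt_irrefl _ hG2
  have hs₀gt : 1 < s₀ := lt_of_lt_of_le hs₁mem.1 hs₀mem.1
  refine ⟨s₀, ⟨⟨hs₀gt, hs₀lt⟩, hs₀eq⟩, ?_⟩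
  rintro s ⟨⟨hsgt, hslt⟩, hseq⟩
  have hGs : G s = 2 := hseq
  exact hanti.injOn (mem_Ioi.mpr hsgt) (mem_Ioi.mpr hs₀gt) (by rw [hGs, hs₀eq])
end

section
/- Let S_n be a walk on ℤ with S_0 = 0, increments bounded below by −1, reflected version R_n ≥ S_n, and suppose R_n − S_n increases by at most C only at times j when the reflected walk visits [0,1]. Then max_{0≤k≤n} (−⌊S_k⌋) ≤ C · #{1 ≤ j ≤ n : R_j ∈ [0,1]}. -/
/-- Let `S_n` be a walk with `S_0 = 0` and increments bounded below by `-1`, and let `R_n ≥ S_n`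
be its reflected version, such that the difference `R_n - S_n` is nondecreasing, starts at `0`,
increases by at most `C` per step, and increases only at times when the reflected walk visits
`[0,1]`. If the difference dominates the running maximum `max_{0≤k≤n} (-⌊S_k⌋)`, then
`max_{0≤k≤n} (-⌊S_k⌋) ≤ C · #{1 ≤ j ≤ n : R_j ∈ [0,1]}`. -/
theorem stmt13 (C : ℝ) (hC : 0 ≤ C) (S R : ℕ → ℝ)
    (hS0 : S 0 = 0)
    (hincr : ∀ n, -1 ≤ S (n + 1) - S n)
    (hRS : ∀ n, S n ≤ R n)
    (hdiff0 : R 0 - S 0 = 0)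
    (hmono : Monotone (fun n => R n - S n))
    (hstep : ∀ n, R (n + 1) - S (n + 1) ≤ (R n - S n) + C)
    (hvisit : ∀ n, R (n + 1) - S (n + 1) ≠ R n - S n → R (n + 1) ∈ Set.Icc (0:ℝ) 1)
    (hdom : ∀ n,
      (((Finset.range (n + 1)).sup' Finset.nonempty_range_add_one fun k => -⌊S k⌋ : ℤ) : ℝ) ≤
        R n - S n) :
    ∀ n,
      (((Finset.range (n + 1)).sup' Finset.nonempty_range_add_one fun k => -⌊S k⌋ : ℤ) : ℝ) ≤
        C * ((Finset.Icc 1 n).filter fun j => R j ∈ Set.Icc (0:ℝ) 1).card := by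
  have key : ∀ n, R n - S n ≤
      C * ((Finset.Icc 1 n).filter fun j => R j ∈ Set.Icc (0:ℝ) 1).card := by
    intro n
    induction n with
    | zero => simp [hdiff0]
    | succ n ih =>
      by_cases h : R (n + 1) - S (n + 1) = R n - S n
      · rw [h]
        refine le_trans ih ?_
        apply mul_le_mul_of_nonneg_left _ hC
        exact_mod_cast Finset.card_le_card (Finset.filter_subset_filter _
          (Finset.Icc_subset_Icc_right (Nat.le_succ n)))
      · have hmem := hvisit n h
        have hsub : insert (n + 1) ((Finset.Icc 1 n).filter
            fun j => R j ∈ Set.Icc (0:ℝ) 1) ⊆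
            (Finset.Icc 1 (n + 1)).filter fun j => R j ∈ Set.Icc (0:ℝ) 1 := by
          intro x hx
          rcases Finset.mem_insert.mp hx with rfl | hx
          · exact Finset.mem_filter.mpr ⟨Finset.mem_Icc.mpr ⟨Nat.succ_le_succ (Nat.zero_le n),
              le_rfl⟩, hmem⟩
          · rcases Finset.mem_filter.mp hx with ⟨h1, h2⟩
            exact Finset.mem_filter.mpr ⟨Finset.mem_Icc.mpr
              ⟨(Finset.mem_Icc.mp h1).1, Nat.le_succ_of_le (Finset.mem_Icc.mp h1).2⟩, h2⟩
        have hnotmem : n + 1 ∉ (Finset.Icc 1 n).filter fun j => R j ∈ Set.Icc (0:ℝ) 1 := by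
          simp
        have hcard : ((Finset.Icc 1 n).filter fun j => R j ∈ Set.Icc (0:ℝ) 1).card + 1 ≤
            ((Finset.Icc 1 (n + 1)).filter fun j => R j ∈ Set.Icc (0:ℝ) 1).card := by
          calc _ = (insert (n + 1) ((Finset.Icc 1 n).filter
              fun j => R j ∈ Set.Icc (0:ℝ) 1)).card := (Finset.card_insert_of_notMem hnotmem).symm
          _ ≤ _ := Finset.card_le_card hsub
        calc R (n + 1) - S (n + 1) ≤ (R n - S n) + C := hstep n
        _ ≤ C * ((Finset.Icc 1 n).filter fun j => R j ∈ Set.Icc (0:ℝ) 1).card + C := by linarith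
        _ = C * (((Finset.Icc 1 n).filter fun j => R j ∈ Set.Icc (0:ℝ) 1).card + 1) := by ring
        _ ≤ _ := by
            apply mul_le_mul_of_nonneg_left _ hC
            exact_mod_cast hcard
  intro n
  exact (hdom n).trans (key n)
end
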